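/- arXiv:math/0602537 — 2 statements merged into one kernel-verified Lean document; each statement's English description precedes it below -/
import Mathlib

section
/- Let R be a regular local ring containing a field, let I ⊆ R be an ideal of height h, and let A = R/I. Let Γ_1, Γ_2, …, Γ_t be the connected components of the graph Γ_A, and for each i let I_i ⊆ R be the intersection of those minimal primes of I of height h whose images in A are the vertices of Γ_i. Then for all i ≠ j, every prime of R containing I_i + I_j has height at least h + 2; in particular height(I_i + I_j) ≥ h + 2. -/
/-!
A prime `P ⊇ I_i + I_j` contains a vertex `V` of `Γ_i` and a vertex `W` of `Γ_j`, by prime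
avoidance over the finitely many minimal primes. Every prime containing `I` has height at least
`ht I`, so lifting chains of `Spec (R/I)` to `Spec R` gives `ht I + ht (P/I) ≤ ht P`. If
`ht P < ht I + 2`, then `P/I` has height at most one; since it strictly contains the distinct
minimal primes `V` and `W`, the ideal `V + W` has height exactly one, so `V` and `W` are adjacent
and `Γ_i = Γ_j`.
-/

open IsLocalRing

noncomputable section

def idealHeight {R : Type*} [CommRing R] (I : Ideal R) : ℕ∞ :=
  ⨅ (P : PrimeSpectrum R) (_ : I ≤ P.asIdeal), Order.height P

def ContainsField (R : Type*) [CommRing R] : Prop := ∃ K : Subring R, IsField K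

def IsRegularLocal (R : Type*) [CommRing R] [IsLocalRing R] : Prop :=
  IsNoetherianRing R ∧ ∃ s : Finset R,
    Ideal.span (s : Set R) = maximalIdeal R ∧ (s.card : WithBot ℕ∞) = ringKrullDim R

def TopMinimalPrimes (B : Type*) [CommRing B] : Type _ :=
  {P : Ideal B // P ∈ minimalPrimes B ∧ ringKrullDim (B ⧸ P) = ringKrullDim B}

def HHGraph (B : Type*) [CommRing B] : SimpleGraph (TopMinimalPrimes B) where
  Adj P Q := P ≠ Q ∧ idealHeight (P.1 ⊔ Q.1) = 1
  symm := ⟨fun P Q h => ⟨h.1.symm, by rw [sup_comm]; exact h.2⟩⟩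
  loopless := ⟨fun P h => h.1 rfl⟩

def componentIdeal {R : Type*} [CommRing R] (I : Ideal R)
    (c : (HHGraph (R ⧸ I)).ConnectedComponent) : Ideal R :=
  ⨅ (P : TopMinimalPrimes (R ⧸ I))
    (_ : (HHGraph (R ⧸ I)).connectedComponentMk P = c),
      Ideal.comap (Ideal.Quotient.mk I) P.1

namespace Order

variable {α β : Type*} [Preorder α] [Preorder β]

lemma height_head_add_length_le_height_last (q : LTSeries α) :
    height q.head + q.length ≤ height q.last := by
  have : Nonempty {s : LTSeries α // s.last = q.head} := ⟨⟨RelSeries.singleton _ q.head, rfl⟩⟩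
  rw [height_eq_iSup_last_eq, iSup_subtype', ENat.iSup_add]
  refine iSup_le fun ⟨s, hs⟩ ↦ ?_
  simpa [RelSeries.last_smash] using length_le_height_last (p := s.smash q hs)

lemma add_height_le_height_apply_of_strictMono (f : α → β) (hf : StrictMono f) {n : ℕ∞}
    (hn : ∀ a, n ≤ height (f a)) (x : α) : n + height x ≤ height (f x) := by
  have : Nonempty {p : LTSeries α // p.last = x} := ⟨⟨RelSeries.singleton _ x, rfl⟩⟩
  rw [height_eq_iSup_last_eq, iSup_subtype', ENat.add_iSup]
  refine iSup_le fun ⟨p, hp⟩ ↦ ?_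
  calc n + p.length ≤ height (p.map f hf).head + (p.map f hf).length := by
        rw [LTSeries.head_map, LTSeries.map_length]
        gcongr
        exact hn _
    _ ≤ height (p.map f hf).last := height_head_add_length_le_height_last _
    _ = height (f x) := by simp [hp]

end Order

theorem Ideal.IsPrime.exists_le_of_iInf_le {R ι : Type*} [CommRing R] [Finite ι]
    {f : ι → Ideal R} {P : Ideal R} (hP : P.IsPrime) (h : ⨅ i, f i ≤ P) : ∃ i, f i ≤ P := by
  have := Fintype.ofFinite ι
  obtain ⟨i, -, hi⟩ := hP.inf_le'.mp ((Finset.inf_univ_eq_iInf f).trans_le h)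
  exact ⟨i, hi⟩

section idealHeight

variable {R : Type*} [CommRing R]

lemma idealHeight_le_height {I : Ideal R} {P : PrimeSpectrum R} (h : I ≤ P.asIdeal) :
    idealHeight I ≤ Order.height P :=
  iInf₂_le P h

lemma le_idealHeight {I : Ideal R} {n : ℕ∞}
    (h : ∀ P : PrimeSpectrum R, I ≤ P.asIdeal → n ≤ Order.height P) : n ≤ idealHeight I :=
  le_iInf₂ h

lemma idealHeight_ker_add_height_le_height_comap {S : Type*} [CommRing S] {f : R →+* S}
    (hf : Function.Surjective f) (q : PrimeSpectrum S) :
    idealHeight (RingHom.ker f) + Order.height q ≤ Order.height (PrimeSpectrum.comap f q) := by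
  have hmono : StrictMono (PrimeSpectrum.comap f) :=
    Monotone.strictMono_of_injective (fun _ _ h ↦ Ideal.comap_mono h)
      (PrimeSpectrum.comap_injective_of_surjective f hf)
  exact Order.add_height_le_height_apply_of_strictMono _ hmono
    (fun q' ↦ idealHeight_le_height (Ideal.comap_mono bot_le)) q

lemma one_le_idealHeight_sup_of_mem_minimalPrimes {P Q : Ideal R} (hP : P ∈ minimalPrimes R)
    (hQ : Q ∈ minimalPrimes R) (hPQ : P ≠ Q) : 1 ≤ idealHeight (P ⊔ Q) := by
  refine le_idealHeight fun z hz ↦ Order.one_le_iff_pos.mpr (Order.height_pos.mpr ?_)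
  refine not_isMin_of_lt (b := ⟨P, hP.1.1⟩) (lt_of_le_of_ne (le_sup_left.trans hz) fun hPz ↦ ?_)
  rw [← hPz] at hz
  have hQP : Q ≤ P := le_sup_right.trans hz
  exact hPQ (le_antisymm (hP.2 ⟨hQ.1.1, bot_le⟩ hQP) hQP)

end idealHeight

instance (B : Type*) [CommRing B] [IsNoetherianRing B] : Finite (TopMinimalPrimes B) :=
  ((minimalPrimes.finite_of_isNoetherianRing B).subset fun _ hP ↦ hP.1).to_subtype

namespace HHGraph

variable {B : Type*} [CommRing B]

lemma adj_of_le_of_height_le_one {V W : TopMinimalPrimes B} (hVW : V ≠ W) {p : PrimeSpectrum B}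
    (hV : V.1 ≤ p.asIdeal) (hW : W.1 ≤ p.asIdeal) (hp : Order.height p ≤ 1) :
    (HHGraph B).Adj V W :=
  ⟨hVW, le_antisymm ((idealHeight_le_height (sup_le hV hW)).trans hp)
    (one_le_idealHeight_sup_of_mem_minimalPrimes V.2.1 W.2.1 (Subtype.coe_injective.ne hVW))⟩

end HHGraph

lemma exists_comap_le_of_componentIdeal_le {R : Type*} [CommRing R] [IsNoetherianRing R]
    {I : Ideal R} {c : (HHGraph (R ⧸ I)).ConnectedComponent} {P : Ideal R} (hP : P.IsPrime)
    (h : componentIdeal I c ≤ P) :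
    ∃ V, (HHGraph (R ⧸ I)).connectedComponentMk V = c ∧
      Ideal.comap (Ideal.Quotient.mk I) V.1 ≤ P := by
  rw [componentIdeal, iInf_subtype'] at h
  obtain ⟨⟨V, hV⟩, hle⟩ := hP.exists_le_of_iInf_le h
  exact ⟨V, hV, hle⟩

lemma idealHeight_add_two_le_height_of_componentIdeal_sup_le {R : Type*} [CommRing R]
    [IsNoetherianRing R] {I : Ideal R} {c c' : (HHGraph (R ⧸ I)).ConnectedComponent}
    (hne : c ≠ c') {P : PrimeSpectrum R}
    (hP : componentIdeal I c ⊔ componentIdeal I c' ≤ P.asIdeal) :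
    idealHeight I + 2 ≤ Order.height P := by
  obtain ⟨V, rfl, hV⟩ := exists_comap_le_of_componentIdeal_le P.isPrime (le_sup_left.trans hP)
  obtain ⟨W, rfl, hW⟩ := exists_comap_le_of_componentIdeal_le P.isPrime (le_sup_right.trans hP)
  obtain ⟨q, rfl⟩ : P ∈ Set.range (PrimeSpectrum.comap (Ideal.Quotient.mk I)) := by
    rw [range_comap_of_surjective _ _ Ideal.Quotient.mk_surjective, Ideal.mk_ker]
    exact (Ideal.map_le_iff_le_comap.mp (by simp)).trans hV
  rw [PrimeSpectrum.comap_asIdeal,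
    Ideal.comap_le_comap_iff_of_surjective _ Ideal.Quotient.mk_surjective] at hV hW
  have hsum := idealHeight_ker_add_height_le_height_comap Ideal.Quotient.mk_surjective q
  rw [Ideal.mk_ker] at hsum
  by_contra hlt
  have hq : Order.height q ≤ 1 := by
    by_contra! hq
    have h2 : (2 : ℕ∞) ≤ Order.height q := Order.add_one_le_of_lt hq
    exact hlt ((add_le_add_right h2 _).trans hsum)
  exact hne (SimpleGraph.ConnectedComponent.sound
    (HHGraph.adj_of_le_of_height_le_one (ne_of_apply_ne _ hne) hV hW hq).reachable)

theorem statement2_general (R : Type) [CommRing R] [IsLocalRing R]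
    (hreg : IsRegularLocal R)
    (I : Ideal R) (h : ℕ) (hht : idealHeight I = (h : ℕ∞))
    (c c' : (HHGraph (R ⧸ I)).ConnectedComponent) (hne : c ≠ c') :
    (∀ P : PrimeSpectrum R, componentIdeal I c ⊔ componentIdeal I c' ≤ P.asIdeal →
        ((h : ℕ∞) + 2) ≤ Order.height P) ∧
      ((h : ℕ∞) + 2) ≤ idealHeight (componentIdeal I c ⊔ componentIdeal I c') := by
  have := hreg.1
  have main (P : PrimeSpectrum R) (hP : componentIdeal I c ⊔ componentIdeal I c' ≤ P.asIdeal) :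
      (h : ℕ∞) + 2 ≤ Order.height P :=
    hht ▸ idealHeight_add_two_le_height_of_componentIdeal_sup_le hne hP
  exact ⟨main, le_idealHeight main⟩

theorem statement2 (R : Type) [CommRing R] [IsLocalRing R]
    (hreg : IsRegularLocal R) (hfield : ContainsField R)
    (I : Ideal R) (h : ℕ) (hht : idealHeight I = (h : ℕ∞))
    (c c' : (HHGraph (R ⧸ I)).ConnectedComponent) (hne : c ≠ c') :
    (∀ P : PrimeSpectrum R, componentIdeal I c ⊔ componentIdeal I c' ≤ P.asIdeal →
        ((h : ℕ∞) + 2) ≤ Order.height P) ∧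
      ((h : ℕ∞) + 2) ≤ idealHeight (componentIdeal I c ⊔ componentIdeal I c') :=
  statement2_general R hreg I h hht c c' hne

end
end

section
/- Let R → T be a flat local homomorphism of regular local rings containing fields such that mT is the maximal ideal of T, where m is the maximal ideal of R, and dim T = dim R = n. Let E be the injective hull of the residue field of R in the category of R-modules and let E_T be the injective hull of the residue field of T in the category of T-modules. Then T ⊗_R E ≅ E_T as T-modules. -/
/-
Since `T` is flat and `mT = m_T`, the embedding `k → E` becomes an embedding
`T ⊗[R] k ≅ T / mT = k_T → T ⊗[R] E`; as `E_T` is injective, `k_T ↪ E_T` extends along it to some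
`G : T ⊗[R] E → E_T`.

`G` is injective: flatness carries the exact sequence `0 → k → E → Hom_R(m, E)`, `e ↦ (a ↦ a e)`,
to `T ⊗ E`, so the elements of `T ⊗ E` killed by `m` are exactly those of `T ⊗ k`. Every element
of `E`, hence of `T ⊗ E`, is killed by a power of `m`, so each nonzero element of `T ⊗ E` has a
nonzero multiple in `T ⊗ k`, on which `G` is injective.

`G` is surjective: `m` is finitely presented and `T` is flat, so
`T ⊗ Hom_R(m, E) ≅ Hom_R(m, T ⊗ E)`, and Baer's criterion for the ideal `m` passes from `E` to
`T ⊗ E`. With it, an induction on the power of `m_T` killing an element of `E_T` shows that the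
element lies in the image of `G`.
-/

open IsLocalRing TensorProduct

noncomputable section

/-- `E`, together with the embedding `ι` of the residue field, is an injective hull of the
residue field of `R`: `E` is an injective module and the image of `ι` is an essential
submodule of `E`. -/
def IsInjectiveHullOfResidueField (R : Type*) [CommRing R] [IsLocalRing R]
    (E : Type*) [AddCommGroup E] [Module R E] (ι : ResidueField R →ₗ[R] E) : Prop :=
  Module.Injective R E ∧ Function.Injective ι ∧
    ∀ N : Submodule R E, N ≠ ⊥ → LinearMap.range ι ⊓ N ≠ ⊥

section Essential

variable {R M : Type*} [CommRing R] [AddCommGroup M] [Module R M]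

theorem exists_smul_ne_zero_smul_mem_of_essential {S : Submodule R M}
    (hS : ∀ N : Submodule R M, N ≠ ⊥ → S ⊓ N ≠ ⊥) {y : M} (hy : y ≠ 0) :
    ∃ s : R, s • y ≠ 0 ∧ s • y ∈ S := by
  have hspan : (R ∙ y) ≠ ⊥ := by simpa [Submodule.span_singleton_eq_bot] using hy
  obtain ⟨w, hw, hw0⟩ := (Submodule.ne_bot_iff _).mp (hS _ hspan)
  obtain ⟨hwS, hwy⟩ := Submodule.mem_inf.mp hw
  obtain ⟨s, rfl⟩ := Submodule.mem_span_singleton.mp hwy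
  exact ⟨s, hw0, hwS⟩

theorem Ideal.exists_smul_ne_zero_forall_smul_eq_zero (I : Ideal R) (t : ℕ) :
    ∀ {v : M}, v ≠ 0 → (∀ r ∈ I ^ t, r • v = 0) →
      ∃ z : R, z • v ≠ 0 ∧ ∀ a ∈ I, a • z • v = 0 := by
  induction t with
  | zero =>
    intro v hv htors
    exact absurd (by simpa using htors 1 (by simp)) hv
  | succ t ih =>
    intro v hv htors
    by_cases hsoc : ∀ a ∈ I, a • v = 0
    · exact ⟨1, by rwa [one_smul], by simpa using hsoc⟩
    push Not at hsoc
    obtain ⟨a, ha, hav⟩ := hsoc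
    obtain ⟨z, hz, hzI⟩ := ih hav fun r hr => by
      rw [smul_smul]; exact htors _ (pow_succ I t ▸ Ideal.mul_mem_mul hr ha)
    exact ⟨z * a, by rwa [mul_smul], by simpa [mul_smul] using hzI⟩

end Essential

section ResidueField

variable {R E : Type*} [CommRing R] [IsLocalRing R] [AddCommGroup E] [Module R E]
  {ι : ResidueField R →ₗ[R] E}

theorem IsLocalRing.ResidueField.smul_eq_zero_of_mem {r : R} (hr : r ∈ maximalIdeal R)
    (w : ResidueField R) : r • w = 0 := by
  rw [Algebra.smul_def, ResidueField.algebraMap_eq, (residue_eq_zero_iff r).mpr hr, zero_mul]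

theorem mem_range_of_maximalIdeal_smul_eq_zero
    (hess : ∀ N : Submodule R E, N ≠ ⊥ → LinearMap.range ι ⊓ N ≠ ⊥) {v : E}
    (hv : ∀ r ∈ maximalIdeal R, r • v = 0) : v ∈ LinearMap.range ι := by
  by_cases hv0 : v = 0
  · exact hv0 ▸ Submodule.zero_mem _
  obtain ⟨s, hs0, hsι⟩ := exists_smul_ne_zero_smul_mem_of_essential hess hv0
  have hs : IsUnit s := by
    by_contra hs
    exact hs0 (hv s ((mem_maximalIdeal s).mpr hs))
  have hsv : ((hs.unit⁻¹ : Rˣ) : R) • s • v = v := by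
    rw [smul_smul, hs.val_inv_mul, one_smul]
  exact hsv ▸ Submodule.smul_mem _ _ hsι

theorem exists_pow_smul_eq_zero_of_mem_maximalIdeal [IsNoetherianRing R]
    (hess : ∀ N : Submodule R E, N ≠ ⊥ → LinearMap.range ι ⊓ N ≠ ⊥) {x : R}
    (hx : x ∈ maximalIdeal R) (e : E) : ∃ n : ℕ, x ^ n • e = 0 := by
  let ann : ℕ →o Ideal R := ⟨fun n => (R ∙ (x ^ n • e)).annihilator,
    monotone_nat_of_le_succ fun n r hr => by
      simp only [Submodule.mem_annihilator_span_singleton] at hr ⊢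
      rw [pow_succ', mul_smul, smul_comm, hr, smul_zero]⟩
  obtain ⟨n, hn⟩ := monotone_stabilizes_iff_noetherian.mpr inferInstance ann
  refine ⟨n, by_contra fun hne => ?_⟩
  obtain ⟨s, hs0, ⟨c, hc⟩⟩ := exists_smul_ne_zero_smul_mem_of_essential hess hne
  have hs : s ∈ ann (n + 1) := by
    show s ∈ (R ∙ (x ^ (n + 1) • e)).annihilator
    rw [Submodule.mem_annihilator_span_singleton, pow_succ', mul_smul, smul_comm, ← hc,
      ← map_smul, IsLocalRing.ResidueField.smul_eq_zero_of_mem hx, map_zero]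
  rw [← hn (n + 1) n.le_succ] at hs
  exact hs0 ((Submodule.mem_annihilator_span_singleton _ _).mp hs)

theorem exists_maximalIdeal_pow_smul_eq_zero [IsNoetherianRing R]
    (hess : ∀ N : Submodule R E, N ≠ ⊥ → LinearMap.range ι ⊓ N ≠ ⊥) (e : E) :
    ∃ t : ℕ, ∀ r ∈ maximalIdeal R ^ t, r • e = 0 := by
  have hrad : maximalIdeal R ≤ (R ∙ e).annihilator.radical := fun x hx => by
    obtain ⟨n, hn⟩ := exists_pow_smul_eq_zero_of_mem_maximalIdeal hess hx e
    exact ⟨n, (Submodule.mem_annihilator_span_singleton _ _).mpr hn⟩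
  obtain ⟨t, ht⟩ := Ideal.exists_pow_le_of_le_radical_of_fg hrad (IsNoetherian.noetherian _)
  exact ⟨t, fun r hr => (Submodule.mem_annihilator_span_singleton _ _).mp (ht hr)⟩

end ResidueField

namespace Ideal

variable {R M : Type*} [CommRing R] [AddCommGroup M] [Module R M] (I : Ideal R)

def smulMap (M : Type*) [AddCommGroup M] [Module R M] : M →ₗ[R] (I →ₗ[R] M) :=
  (LinearMap.lsmul R M).flip.compl₂ I.subtype

@[simp]
theorem smulMap_apply (m : M) (a : I) : I.smulMap M m a = (a : R) • m := rfl

theorem smulMap_surjective_of_baer (h : Module.Baer R M) : Function.Surjective (I.smulMap M) :=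
  fun f => by
    obtain ⟨g, hg⟩ := h I f
    refine ⟨g 1, LinearMap.ext fun a => ?_⟩
    rw [smulMap_apply, ← map_smul, smul_eq_mul, mul_one, hg a a.2]

theorem smulMap_exact_of_essential [IsLocalRing R] {ι : IsLocalRing.ResidueField R →ₗ[R] M}
    (hess : ∀ N : Submodule R M, N ≠ ⊥ → LinearMap.range ι ⊓ N ≠ ⊥) :
    Function.Exact ι ((maximalIdeal R).smulMap M) := fun v => by
  rw [LinearMap.ext_iff, Subtype.forall]
  refine ⟨fun hv => mem_range_of_maximalIdeal_smul_eq_zero hess hv, ?_⟩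
  rintro ⟨c, rfl⟩ a ha
  rw [smulMap_apply, ← map_smul, IsLocalRing.ResidueField.smul_eq_zero_of_mem ha, map_zero]
  rfl

variable (T : Type*) [CommRing T] [Algebra R T] [Module.Flat R T] [Module.FinitePresentation R I]

theorem exists_linearEquiv_comp_lTensor_smulMap :
    ∃ Φ : T ⊗[R] (I →ₗ[R] M) ≃ₗ[R] (I →ₗ[R] T ⊗[R] M),
      Φ.toLinearMap ∘ₗ (I.smulMap M).lTensor T = I.smulMap (T ⊗[R] M) := by
  let hbc := Module.FinitePresentation.isBaseChange_map R I M T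
  refine ⟨(hbc.equiv.trans (LinearMap.liftBaseChangeEquiv T).symm).restrictScalars R,
    TensorProduct.ext' fun t m => LinearMap.ext fun a => ?_⟩
  simp [hbc.equiv_tmul, TensorProduct.smul_tmul']

variable {I}

theorem smulMap_baseChange_surjective (h : Function.Surjective (I.smulMap M)) :
    Function.Surjective (I.smulMap (T ⊗[R] M)) := by
  obtain ⟨Φ, hΦ⟩ := I.exists_linearEquiv_comp_lTensor_smulMap (M := M) T
  rw [← hΦ, LinearMap.coe_comp]
  exact Φ.surjective.comp (LinearMap.lTensor_surjective T h)

theorem smulMap_baseChange_exact {K : Type*} [AddCommGroup K] [Module R K] {ι : K →ₗ[R] M}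
    (h : Function.Exact ι (I.smulMap M)) :
    Function.Exact (ι.lTensor T) (I.smulMap (T ⊗[R] M)) := by
  obtain ⟨Φ, hΦ⟩ := I.exists_linearEquiv_comp_lTensor_smulMap (M := M) T
  rw [← hΦ, LinearEquiv.postcomp_exact_iff_exact]
  exact Module.Flat.lTensor_exact T h

end Ideal

section Criteria

variable {R M N : Type*} [CommRing R] [AddCommGroup M] [Module R M] [AddCommGroup N] [Module R N]

theorem LinearMap.injective_of_injective_comp_of_essential {K : Type*} [AddCommGroup K]
    [Module R K] {j : K →ₗ[R] M} {G : M →ₗ[R] N} (hGj : Function.Injective (G ∘ₗ j))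
    (hj : ∀ v : M, v ≠ 0 → ∃ z : R, z • v ≠ 0 ∧ z • v ∈ LinearMap.range j) :
    Function.Injective G := by
  refine (injective_iff_map_eq_zero G).mpr fun v hv => by_contra fun hv0 => ?_
  obtain ⟨z, hz, k, hk⟩ := hj v hv0
  have hk0 : k = 0 := hGj (by rw [map_zero, LinearMap.comp_apply, hk, map_smul, hv, smul_zero])
  exact hz (by rw [← hk, hk0, map_zero])

theorem Ideal.mem_range_of_pow_smul_eq_zero (I : Ideal R) {G : M →ₗ[R] N}
    (hG : Function.Injective G) (hM : Function.Surjective (I.smulMap M))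
    (hsoc : ∀ u : N, (∀ a ∈ I, a • u = 0) → u ∈ LinearMap.range G) (t : ℕ) :
    ∀ u : N, (∀ a ∈ I ^ t, a • u = 0) → u ∈ LinearMap.range G := by
  induction t with
  | zero =>
    intro u hu
    have hu0 : u = 0 := by simpa using hu 1 (by simp)
    exact hu0 ▸ Submodule.zero_mem _
  | succ t ih =>
    intro u hu
    have hIu : ∀ a : I, (a : R) • u ∈ LinearMap.range G := fun a => ih _ fun r hr => by
      rw [smul_smul]; exact hu _ (pow_succ I t ▸ Ideal.mul_mem_mul hr a.2)
    -- `a ↦ G⁻¹ (a • u)` is multiplication by some `v` on `I`, so `G v - u` is killed by `I`.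
    let ψ : I →ₗ[R] M := (LinearEquiv.ofInjective G hG).symm.toLinearMap ∘ₗ
      (((LinearMap.toSpanSingleton R N u) ∘ₗ I.subtype).codRestrict _ hIu)
    obtain ⟨v, hv⟩ := hM ψ
    have hGv : ∀ a : I, (a : R) • G v = (a : R) • u := fun a => by
      rw [← map_smul, ← smulMap_apply, hv]
      exact congrArg Subtype.val ((LinearEquiv.ofInjective G hG).apply_symm_apply _)
    obtain ⟨w, hw⟩ := hsoc (G v - u) fun a ha => by rw [smul_sub, hGv ⟨a, ha⟩, sub_self]
    exact ⟨v - w, by rw [map_sub, hw, sub_sub_cancel]⟩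

end Criteria

section BaseChange

variable {R T M : Type*} [CommRing R] [CommRing T] [Algebra R T]

theorem Ideal.smul_eq_zero_of_mem_map [AddCommGroup M] [Module R M] [Module T M]
    [IsScalarTower R T M] {I : Ideal R} {u : M} (hu : ∀ a ∈ I, a • u = 0) {z : T}
    (hz : z ∈ I.map (algebraMap R T)) : z • u = 0 := by
  refine (Submodule.mem_annihilator_span_singleton u z).mp (Ideal.map_le_iff_le_comap.mpr ?_ hz)
  intro a ha
  rw [Ideal.mem_comap, Submodule.mem_annihilator_span_singleton, algebraMap_smul]
  exact hu a ha

theorem TensorProduct.exists_map_pow_smul_eq_zero [AddCommGroup M] [Module R M] (I : Ideal R)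
    (h : ∀ m : M, ∃ t : ℕ, ∀ r ∈ I ^ t, r • m = 0) (v : T ⊗[R] M) :
    ∃ t : ℕ, ∀ z ∈ I.map (algebraMap R T) ^ t, z • v = 0 := by
  induction v using TensorProduct.induction_on with
  | zero => exact ⟨0, fun z _ => smul_zero z⟩
  | tmul s m =>
    obtain ⟨t, ht⟩ := h m
    refine ⟨t, fun z hz =>
      Ideal.smul_eq_zero_of_mem_map (M := T ⊗[R] M) (I := I ^ t) (fun r hr => ?_) ?_⟩
    · rw [← tmul_smul, ht r hr, tmul_zero]
    · rwa [Ideal.map_pow]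
  | add v w hv hw =>
    obtain ⟨t₁, ht₁⟩ := hv
    obtain ⟨t₂, ht₂⟩ := hw
    refine ⟨max t₁ t₂, fun z hz => ?_⟩
    rw [smul_add, ht₁ z (Ideal.pow_le_pow_right (le_max_left t₁ t₂) hz),
      ht₂ z (Ideal.pow_le_pow_right (le_max_right t₁ t₂) hz), add_zero]

variable [IsLocalRing R] [IsLocalRing T]

def residueFieldBaseChangeEquiv
    (hmax : Ideal.map (algebraMap R T) (maximalIdeal R) = maximalIdeal T) :
    T ⊗[R] ResidueField R ≃ₗ[T] ResidueField T :=
  (Algebra.TensorProduct.quotIdealMapEquivTensorQuot T (maximalIdeal R)).toLinearEquiv.symm ≪≫ₗ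
    Submodule.quotEquivOfEq _ _ hmax

theorem exists_smul_ne_zero_mem_range_baseChange [IsNoetherianRing R] [Module.Flat R T]
    (hmax : Ideal.map (algebraMap R T) (maximalIdeal R) = maximalIdeal T)
    {E : Type*} [AddCommGroup E] [Module R E] {ι : ResidueField R →ₗ[R] E}
    (hess : ∀ N : Submodule R E, N ≠ ⊥ → LinearMap.range ι ⊓ N ≠ ⊥) (v : T ⊗[R] E)
    (hv : v ≠ 0) :
    ∃ z : T, z • v ≠ 0 ∧ z • v ∈ LinearMap.range (ι.baseChange T) := by
  have : Module.FinitePresentation R (maximalIdeal R) := Module.finitePresentation_of_finite _ _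
  have hsoc :=
    (maximalIdeal R).smulMap_baseChange_exact T (Ideal.smulMap_exact_of_essential hess)
  obtain ⟨t, ht⟩ := hmax ▸ TensorProduct.exists_map_pow_smul_eq_zero (T := T) _
    (exists_maximalIdeal_pow_smul_eq_zero hess) v
  obtain ⟨z, hz, hzm⟩ := (maximalIdeal T).exists_smul_ne_zero_forall_smul_eq_zero t hv ht
  refine ⟨z, hz, (hsoc _).mp (LinearMap.ext fun a => ?_)⟩
  rw [Ideal.smulMap_apply, LinearMap.zero_apply, ← algebraMap_smul T]
  exact hzm _ (hmax ▸ Ideal.mem_map_of_mem _ a.2)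

universe u in
theorem nonempty_baseChange_injectiveHull_equiv {R T : Type u} [CommRing R] [CommRing T]
    [Algebra R T] [IsLocalRing R] [IsLocalRing T] [IsNoetherianRing R] [IsNoetherianRing T]
    [Module.Flat R T] (hmax : Ideal.map (algebraMap R T) (maximalIdeal R) = maximalIdeal T)
    {E : Type u} [AddCommGroup E] [Module R E] {ι : ResidueField R →ₗ[R] E}
    (hE : IsInjectiveHullOfResidueField R E ι)
    {ET : Type u} [AddCommGroup ET] [Module T ET] {ιT : ResidueField T →ₗ[T] ET}
    (hET : IsInjectiveHullOfResidueField T ET ιT) :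
    Nonempty ((T ⊗[R] E) ≃ₗ[T] ET) := by
  obtain ⟨hEinj, hι, hEess⟩ := hE
  obtain ⟨hETinj, hιT, hETess⟩ := hET
  let e := residueFieldBaseChangeEquiv hmax
  obtain ⟨G, hG⟩ := hETinj.out (ι.baseChange T)
    (Module.Flat.lTensor_preserves_injective_linearMap ι hι) (ιT ∘ₗ e.toLinearMap)
  have hGinj : Function.Injective G := by
    refine LinearMap.injective_of_injective_comp_of_essential (G := G) ?_
      (exists_smul_ne_zero_mem_range_baseChange hmax hEess)
    rw [show G ∘ₗ ι.baseChange T = ιT ∘ₗ e.toLinearMap from LinearMap.ext hG]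
    exact hιT.comp e.injective
  let _ : Module R ET := Module.compHom ET (algebraMap R T)
  have : IsScalarTower R T ET := IsScalarTower.of_compHom R T ET
  have : Module.FinitePresentation R (maximalIdeal R) := Module.finitePresentation_of_finite _ _
  have hGsurj : Function.Surjective G := fun u => by
    obtain ⟨t, ht⟩ := exists_maximalIdeal_pow_smul_eq_zero hETess u
    refine (maximalIdeal R).mem_range_of_pow_smul_eq_zero (G := G.restrictScalars R) hGinj
      ((maximalIdeal R).smulMap_baseChange_surjective T
        (Ideal.smulMap_surjective_of_baer _ (Module.Baer.of_injective hEinj)))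
      (fun u hu => ?_) t u fun a ha => ?_
    · obtain ⟨c, rfl⟩ := mem_range_of_maximalIdeal_smul_eq_zero hETess
        fun z hz => Ideal.smul_eq_zero_of_mem_map hu (hmax ▸ hz)
      exact ⟨ι.baseChange T (e.symm c), by simp [hG]⟩
    · rw [← algebraMap_smul T]
      exact ht _ (by rw [← hmax, ← Ideal.map_pow]; exact Ideal.mem_map_of_mem _ ha)
  exact ⟨.ofBijective G ⟨hGinj, hGsurj⟩⟩

end BaseChange

theorem statement5_general (R T : Type) [CommRing R] [CommRing T]
    [IsLocalRing R] [IsLocalRing T] [Algebra R T]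
    (hRreg : IsRegularLocal R) (hTreg : IsRegularLocal T)
    [Module.Flat R T]
    (hmax : Ideal.map (algebraMap R T) (maximalIdeal R) = maximalIdeal T)
    (E : Type) [AddCommGroup E] [Module R E] (ι : ResidueField R →ₗ[R] E)
    (hE : IsInjectiveHullOfResidueField R E ι)
    (ET : Type) [AddCommGroup ET] [Module T ET] (ιT : ResidueField T →ₗ[T] ET)
    (hET : IsInjectiveHullOfResidueField T ET ιT) :
    Nonempty ((T ⊗[R] E) ≃ₗ[T] ET) := by
  have : IsNoetherianRing R := hRreg.1
  have : IsNoetherianRing T := hTreg.1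
  exact nonempty_baseChange_injectiveHull_equiv hmax hE hET

theorem statement5 (R T : Type) [CommRing R] [CommRing T]
    [IsLocalRing R] [IsLocalRing T] [Algebra R T]
    (hRreg : IsRegularLocal R) (hTreg : IsRegularLocal T)
    (hRfield : ContainsField R) (hTfield : ContainsField T)
    [Module.Flat R T] (hloc : IsLocalHom (algebraMap R T))
    (hmax : Ideal.map (algebraMap R T) (maximalIdeal R) = maximalIdeal T)
    (n : ℕ) (hdimR : ringKrullDim R = n) (hdimT : ringKrullDim T = n)
    (E : Type) [AddCommGroup E] [Module R E] (ι : ResidueField R →ₗ[R] E)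
    (hE : IsInjectiveHullOfResidueField R E ι)
    (ET : Type) [AddCommGroup ET] [Module T ET] (ιT : ResidueField T →ₗ[T] ET)
    (hET : IsInjectiveHullOfResidueField T ET ιT) :
    Nonempty ((T ⊗[R] E) ≃ₗ[T] ET) :=
  statement5_general R T hRreg hTreg hmax E ι hE ET ιT hET
end
end
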